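/- Let n ≥ 1, p ∈ [1,∞), and let ζ : ℝ → (0,∞) be continuous and strictly decreasing such that ∫₀^∞ ζ(t)^p t^(n−1) dt < ∞. If u_k, u ∈ Conv_c^{(n)}(ℝⁿ) are such that ∫_{ℝⁿ} |ζ(u_k(x)) − ζ(u(x))|^p dx → 0, then u_k(x₀) → +∞ as k → ∞ for every point x₀ in the interior of the complement ℝⁿ \ {u < +∞} of the domain of u. -/

import Mathlib

/-!
Suppose `u k x₀ ≤ C` for infinitely many `k`. Since `v` is finite on a ball, `v ≤ m` on a set `A`
of positive measure, and `L^p`-convergence of `ζ ∘ u k` to `ζ ∘ v` forces `u k ≤ m + 1` on most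
of `A`. By convexity `u k ≤ max C (m + 1)` on the contraction of that part of `A` towards `x₀`,
which lies in a ball where `v = ⊤`; there `|ζ ∘ u k - ζ ∘ v| ≥ ζ (max C (m + 1)) > 0` on a set of
measure at least a fixed multiple of that of `A`, which contradicts the convergence.
The integrands are integrable because coercive convex functions grow at least linearly and
`ζ ^ p` has a finite `n`-dimensional radial moment.
-/

open MeasureTheory Filter Topology Set
open scoped Classical ENNReal

noncomputable section

abbrev En (n : ℕ) := EuclideanSpace ℝ (Fin n)

/-- `ζ` applied to an extended real value, with the convention `ζ (+∞) = 0`. -/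
def zeval (ζ : ℝ → ℝ) (t : EReal) : ℝ := if t = ⊤ then 0 else ζ t.toReal

/-- The epigraph of an extended-real-valued function. -/
def epiSet {n : ℕ} (u : En n → EReal) : Set (En n × ℝ) := {p | u p.1 ≤ (p.2 : EReal)}

/-- `Conv_c(ℝⁿ)`: proper, lower semicontinuous, convex, coercive functions with
values in `ℝ ∪ {+∞}`. -/
def ConvC (n : ℕ) (u : En n → EReal) : Prop :=
  (∀ x, u x ≠ ⊥) ∧ (∃ x, u x ≠ ⊤) ∧ LowerSemicontinuous u ∧
    Convex ℝ (epiSet u) ∧ Tendsto u (cocompact (En n)) (𝓝 ⊤)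

/-- `Conv_c^{(n)}(ℝⁿ)`: members of `Conv_c(ℝⁿ)` with full-dimensional domain. -/
def ConvCd (n : ℕ) (u : En n → EReal) : Prop :=
  ConvC n u ∧ (interior {x | u x ≠ ⊤}).Nonempty

/-- Epi-convergence of a sequence of extended-real-valued functions. -/
def EpiTendsto {n : ℕ} (u : ℕ → En n → EReal) (v : En n → EReal) : Prop :=
  ∀ x : En n,
    (∀ y : ℕ → En n, Tendsto y atTop (𝓝 x) →
      v x ≤ Filter.liminf (fun k => u k (y k)) atTop) ∧
    (∃ y : ℕ → En n, Tendsto y atTop (𝓝 x) ∧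
      Filter.limsup (fun k => u k (y k)) atTop ≤ v x)

/-- Super-coercivity: `u x / ‖x‖ → +∞` as `‖x‖ → ∞`. -/
def SuperCoercive {n : ℕ} (u : En n → EReal) : Prop :=
  ∀ M : ℝ, ∀ᶠ x in cocompact (En n), ((M * ‖x‖ : ℝ) : EReal) ≤ u x

/-- The functional `δ_{ζ,p}`. -/
def deltaZP {n : ℕ} (ζ : ℝ → ℝ) (p : ℝ) (u v : En n → EReal) : ℝ :=
  (∫ x : En n, |zeval ζ (u x) - zeval ζ (v x)| ^ p) ^ (1 / p)

/-- The functional `δ_{ζ,1} = δ_ζ`. -/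
def delta1 {n : ℕ} (ζ : ℝ → ℝ) (u v : En n → EReal) : ℝ :=
  ∫ x : En n, |zeval ζ (u x) - zeval ζ (v x)|

/-- `f` applied to an extended real value with the convention `f (+∞) = +∞`. -/
def emap (f : ℝ → ℝ) (t : EReal) : EReal := if t = ⊤ then ⊤ else ((f t.toReal : ℝ) : EReal)

/-- The (convex) indicator function `I^∞_K + t`. -/
def indE {n : ℕ} (K : Set (En n)) (t : ℝ) : En n → EReal :=
  fun x => if x ∈ K then (t : EReal) else ⊤

/-- Nondegenerate parallelotope: Minkowski sum of `n` linearly independent segments. -/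
def IsParallelotope {n : ℕ} (P : Set (En n)) : Prop :=
  ∃ (z : En n) (b : Fin n → En n), LinearIndependent ℝ b ∧
    P = (fun c : Fin n → ℝ => z + ∑ i, c i • b i) '' (Set.univ.pi fun _ => Set.Icc (0:ℝ) 1)

/-- Convex body with nonempty interior. -/
def IsConvexBodyI {n : ℕ} (K : Set (En n)) : Prop :=
  IsCompact K ∧ Convex ℝ K ∧ (interior K).Nonempty

/-- Convex body: nonempty compact convex set. -/
def IsCB {n : ℕ} (K : Set (En n)) : Prop := K.Nonempty ∧ IsCompact K ∧ Convex ℝ K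

/-- The extension `d̂_H` of the Hausdorff metric to `K(ℝⁿ) ∪ {∅}`. -/
def dhatH {n : ℕ} (K L : Set (En n)) : ℝ :=
  if K = ∅ then (if L = ∅ then 0 else max 1 (Metric.hausdorffDist L {0}))
  else if L = ∅ then max 1 (Metric.hausdorffDist K {0})
  else Metric.hausdorffDist K L

/-- The functional `δ_ζ^H`. -/
def deltaH {n : ℕ} (ζ : ℝ → ℝ) (u v : En n → EReal) : ℝ :=
  ∫ s in Set.Ioi (0:ℝ), dhatH {x | s ≤ zeval ζ (u x)} {x | s ≤ zeval ζ (v x)}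

/-- The Legendre–Fenchel conjugate. -/
def conjF {n : ℕ} (u : En n → EReal) : En n → EReal :=
  fun y => ⨆ x : En n, (((inner ℝ x y : ℝ) : EReal) - u x)

/-- The admissible set in the definition of the Hausdorff-type metric `δ` of Section 5.2:
`λ > 0` such that `‖u^* - v^*‖_{∞, (1/λ)Bⁿ} ≤ λ`. -/
def DSet {n : ℕ} (u v : En n → EReal) : Set ℝ :=
  {l : ℝ | 0 < l ∧ ∀ x : En n, ‖x‖ ≤ 1 / l →
    conjF u x ≤ conjF v x + (l : EReal) ∧ conjF v x ≤ conjF u x + (l : EReal)}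

/-- The Hausdorff-type metric `δ` of Section 5.2. -/
def deltaStar {n : ℕ} (u v : En n → EReal) : ℝ := sInf (DSet u v)


open Metric

section Zeval

variable {ζ : ℝ → ℝ}

lemma measurable_zeval (hζ : Measurable ζ) : Measurable (zeval ζ) :=
  Measurable.ite (measurableSet_singleton ⊤) measurable_const (hζ.comp measurable_ereal_toReal)

@[simp]
lemma zeval_top : zeval ζ ⊤ = 0 := if_pos rfl

lemma zeval_nonneg (hζpos : ∀ t, 0 < ζ t) (q : EReal) : 0 ≤ zeval ζ q := by
  unfold zeval
  split_ifs
  exacts [le_rfl, (hζpos _).le]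

lemma zeval_le (hζpos : ∀ t, 0 < ζ t) (hζanti : Antitone ζ) {q : EReal} {c : ℝ}
    (h : (c : EReal) ≤ q) : zeval ζ q ≤ ζ c := by
  unfold zeval
  split_ifs with hq
  · exact (hζpos c).le
  · exact hζanti (by simpa using EReal.toReal_le_toReal h (EReal.coe_ne_bot c) hq)

lemma le_zeval (hζanti : Antitone ζ) {q : EReal} {c : ℝ} (hbot : q ≠ ⊥) (h : q ≤ c) :
    ζ c ≤ zeval ζ q := by
  have htop : q ≠ ⊤ := ne_top_of_le_ne_top (EReal.coe_ne_top c) h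
  rw [zeval, if_neg htop]
  exact hζanti (by simpa using EReal.toReal_le_toReal h hbot (EReal.coe_ne_top c))

end Zeval

section Epigraph

variable {n : ℕ} {w : En n → EReal}

lemma Convex.apply_lineMap_le (hw : Convex ℝ (epiSet w)) {x y : En n} {a b θ : ℝ}
    (hx : w x ≤ a) (hy : w y ≤ b) (hθ₀ : 0 ≤ θ) (hθ₁ : θ ≤ 1) :
    w (AffineMap.lineMap x y θ) ≤ (((1 - θ) * a + θ * b : ℝ) : EReal) := by
  have := hw (show (x, a) ∈ epiSet w from hx) (show (y, b) ∈ epiSet w from hy)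
    (sub_nonneg.2 hθ₁) hθ₀ (sub_add_cancel 1 θ)
  simpa [epiSet, AffineMap.lineMap_apply_module] using this

lemma Convex.add_div_le_of_lt_on_sphere (hw : Convex ℝ (epiSet w)) {x₁ x : En n} {t R : ℝ}
    (hx₁ : w x₁ ≤ t) (hR : 0 < R) (hsphere : ∀ z, dist z x₁ = R → ((t + 1 : ℝ) : EReal) < w z)
    (hx : R < dist x x₁) : ((t + dist x x₁ / R : ℝ) : EReal) ≤ w x := by
  by_contra! hlt
  obtain ⟨s, hxs, hs⟩ := EReal.lt_iff_exists_real_btwn.1 hlt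
  have hd : 0 < dist x x₁ := hR.trans hx
  set θ := R / dist x x₁ with hθ
  have hθ₀ : 0 < θ := by positivity
  have hθ₁ : θ ≤ 1 := (div_le_one hd).2 hx.le
  have hz : dist (AffineMap.lineMap x₁ x θ) x₁ = R := by
    rw [dist_lineMap_left, Real.norm_of_nonneg hθ₀.le, dist_comm, hθ, div_mul_cancel₀ _ hd.ne']
  have hcomb := (hsphere _ hz).trans_le (hw.apply_lineMap_le hx₁ hxs.le hθ₀.le hθ₁)
  rw [EReal.coe_lt_coe_iff] at hcomb hs
  have h1 : 1 < θ * (s - t) := by linarith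
  rw [hθ, div_mul_eq_mul_div, one_lt_div hd] at h1
  have h2 := (lt_div_iff₀ hR).1 (by linarith : s - t < dist x x₁ / R)
  linarith

lemma ConvC.exists_linear_lower_bound (hw : ConvC n w) :
    ∃ a b : ℝ, 0 < a ∧ ∀ x, ((a * ‖x‖ - b : ℝ) : EReal) ≤ w x := by
  obtain ⟨hbot, ⟨x₁, hx₁⟩, hlsc, hcvx, hcoer⟩ := hw
  set t := (w x₁).toReal
  have hwx₁ : w x₁ = t := (EReal.coe_toReal hx₁ (hbot x₁)).symm
  obtain ⟨R₀, hR₀⟩ := (mem_cocompact_iff_closedBall_compl_subset x₁).1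
    (EReal.tendsto_nhds_top_iff_real.1 hcoer (t + 1))
  set R := max R₀ 0 + 1
  have hR : 0 < R := by positivity
  have hsphere : ∀ z, dist z x₁ = R → ((t + 1 : ℝ) : EReal) < w z := fun z hz =>
    hR₀ (by simp only [mem_compl_iff, mem_closedBall, not_le, hz, R]; linarith [le_max_left R₀ 0])
  obtain ⟨xm, -, hxm⟩ := (hlsc.lowerSemicontinuousOn (closedBall x₁ R)).exists_isMinOn
    ⟨x₁, mem_closedBall_self hR.le⟩ (isCompact_closedBall x₁ R)
  have hxm_top : w xm ≠ ⊤ := ne_top_of_le_ne_top hx₁ (hxm (mem_closedBall_self hR.le))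
  set m := (w xm).toReal
  have hm : ∀ x ∈ closedBall x₁ R, (m : EReal) ≤ w x := fun x hx => by
    rw [EReal.coe_toReal hxm_top (hbot xm)]; exact hxm hx
  refine ⟨1 / R, ‖x₁‖ / R - min m t + 1, by positivity, fun x => ?_⟩
  have hnorm : ‖x‖ / R ≤ dist x x₁ / R + ‖x₁‖ / R := by
    rw [← add_div, dist_eq_norm]
    gcongr
    simpa using norm_sub_norm_le x x₁
  have key : ((dist x x₁ / R + min m t - 1 : ℝ) : EReal) ≤ w x := by
    rcases le_or_gt (dist x x₁) R with hx | hx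
    · refine le_trans (EReal.coe_le_coe_iff.2 ?_) (hm x hx)
      have := (div_le_one hR).2 hx
      linarith [min_le_left m t]
    · refine le_trans (EReal.coe_le_coe_iff.2 ?_)
        (hcvx.add_div_le_of_lt_on_sphere hwx₁.le hR hsphere hx)
      linarith [min_le_right m t]
  refine le_trans (EReal.coe_le_coe_iff.2 ?_) key
  rw [one_div_mul_eq_div]
  linarith

end Epigraph

section Integrability

variable {n : ℕ}

lemma integrable_comp_norm_of_integrableOn (hn : 1 ≤ n) {f : ℝ → ℝ}
    (hf : IntegrableOn (fun t => f t * t ^ (n - 1)) (Ioi 0)) :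
    Integrable (fun x : En n => f ‖x‖) := by
  have : Nonempty (Fin n) := Fin.pos_iff_nonempty.1 hn
  rw [integrable_fun_norm_addHaar, finrank_euclideanSpace_fin]
  simpa only [smul_eq_mul, mul_comm] using hf

variable {ζ : ℝ → ℝ} {p : ℝ} {w : En n → EReal}

lemma ConvC.measurable_zeval_comp (hζ : Measurable ζ) (hw : ConvC n w) :
    Measurable fun x => zeval ζ (w x) :=
  (measurable_zeval hζ).comp hw.2.2.1.measurable

lemma ConvC.integrable_zeval_rpow (hn : 1 ≤ n) (hp : 0 ≤ p) (hζpos : ∀ t, 0 < ζ t)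
    (hζcont : Continuous ζ) (hζanti : Antitone ζ)
    (hmom : IntegrableOn (fun t => ζ t ^ p * t ^ (n - 1)) (Ioi 0)) (hw : ConvC n w) :
    Integrable (fun x => zeval ζ (w x) ^ p) := by
  obtain ⟨a, b, ha, hab⟩ := hw.exists_linear_lower_bound
  set T := 2 * |b| / a
  have hnear : Integrable ((closedBall (0 : En n) T).indicator fun _ => ζ (-b) ^ p) :=
    (integrableOn_const measure_closedBall_lt_top.ne).integrable_indicator measurableSet_closedBall
  have hfar : Integrable fun x : En n => ζ ‖(a / 2) • x‖ ^ p :=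
    (integrable_comp_norm_of_integrableOn hn hmom).comp_smul (by positivity)
  refine (hnear.add hfar).mono'
    ((hw.measurable_zeval_comp hζcont.measurable).pow_const p).aestronglyMeasurable
    (.of_forall fun x => ?_)
  have hpos : ∀ t, 0 ≤ ζ t ^ p := fun t => Real.rpow_nonneg (hζpos t).le p
  rw [Real.norm_of_nonneg (Real.rpow_nonneg (zeval_nonneg hζpos _) p), Pi.add_apply]
  refine (Real.rpow_le_rpow (zeval_nonneg hζpos _) (zeval_le hζpos hζanti (hab x)) hp).trans ?_
  by_cases hx : x ∈ closedBall (0 : En n) T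
  · rw [indicator_of_mem hx]
    have : ζ (a * ‖x‖ - b) ≤ ζ (-b) := hζanti (by nlinarith [norm_nonneg x])
    linarith [Real.rpow_le_rpow (hζpos _).le this hp, hpos ‖(a / 2) • x‖]
  · rw [indicator_of_notMem hx, zero_add, norm_smul, Real.norm_of_nonneg (by positivity)]
    rw [mem_closedBall_zero_iff, not_le, div_lt_iff₀ ha] at hx
    exact Real.rpow_le_rpow (hζpos _).le (hζanti (by linarith [le_abs_self b])) hp

lemma ConvC.memLp_zeval (hn : 1 ≤ n) (hp : 0 < p) (hζpos : ∀ t, 0 < ζ t)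
    (hζcont : Continuous ζ) (hζanti : Antitone ζ)
    (hmom : IntegrableOn (fun t => ζ t ^ p * t ^ (n - 1)) (Ioi 0)) (hw : ConvC n w) :
    MemLp (fun x => zeval ζ (w x)) (ENNReal.ofReal p) := by
  rw [← integrable_norm_rpow_iff (hw.measurable_zeval_comp hζcont.measurable).aestronglyMeasurable
    (by simpa using hp) ENNReal.ofReal_ne_top, ENNReal.toReal_ofReal hp.le]
  simpa only [Real.norm_of_nonneg (zeval_nonneg hζpos _)] using
    hw.integrable_zeval_rpow hn hp.le hζpos hζcont hζanti hmom

end Integrability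

lemma tendsto_measure_le_abs_of_tendsto_integral_rpow {α : Type*} [MeasurableSpace α]
    {μ : Measure α} {g : ℕ → α → ℝ} {p c : ℝ} (hp : 0 < p) (hc : 0 < c)
    (hg : ∀ k, Integrable (fun x => |g k x| ^ p) μ)
    (h : Tendsto (fun k => ∫ x, |g k x| ^ p ∂μ) atTop (𝓝 0)) :
    Tendsto (fun k => μ {x | c ≤ |g k x|}) atTop (𝓝 0) := by
  have hcp : ENNReal.ofReal (c ^ p) ≠ 0 := by simpa using Real.rpow_pos_of_pos hc p
  have hmarkov : ∀ k, μ {x | c ≤ |g k x|}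
      ≤ ENNReal.ofReal (∫ x, |g k x| ^ p ∂μ) / ENNReal.ofReal (c ^ p) := fun k => by
    rw [ofReal_integral_eq_lintegral_ofReal (hg k) (.of_forall fun x => by positivity)]
    refine le_trans (measure_mono fun x hx => ?_)
      (meas_ge_le_lintegral_div (hg k).1.aemeasurable.ennreal_ofReal hcp ENNReal.ofReal_ne_top)
    exact ENNReal.ofReal_le_ofReal (Real.rpow_le_rpow hc.le hx hp.le)
  have hlim : Tendsto (fun k => ENNReal.ofReal (∫ x, |g k x| ^ p ∂μ) / ENNReal.ofReal (c ^ p))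
      atTop (𝓝 0) := by
    simpa using ENNReal.Tendsto.div_const (ENNReal.tendsto_ofReal h) (Or.inr hcp)
  exact tendsto_of_tendsto_of_tendsto_of_le_of_le tendsto_const_nhds hlim (fun _ => bot_le)
    hmarkov

section Contraction

variable {n : ℕ} {ζ : ℝ → ℝ} {w v : En n → EReal}

lemma measure_le_of_apply_center_le (hζpos : ∀ t, 0 < ζ t) (hζanti : Antitone ζ)
    (hw : Convex ℝ (epiSet w)) (hwbot : ∀ x, w x ≠ ⊥) {x₀ : En n} {r R : ℝ} (hr : 0 < r)
    (hrR : r ≤ R) (hvtop : ∀ y ∈ ball x₀ r, v y = ⊤) {A : Set (En n)} (hA : A ⊆ ball x₀ R)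
    {m C : ℝ} (hvA : ∀ x ∈ A, ζ m ≤ zeval ζ (v x)) (hmC : m + 1 ≤ C) (hC : w x₀ ≤ C) :
    volume A ≤ volume {x | ζ m - ζ (m + 1) ≤ |zeval ζ (w x) - zeval ζ (v x)|}
      + ENNReal.ofReal ((R / r) ^ n) * volume {x | ζ C ≤ |zeval ζ (w x) - zeval ζ (v x)|} := by
  set G := {x ∈ A | w x ≤ (m + 1 : ℝ)}
  set θ := r / R
  have hR : 0 < R := hr.trans_le hrR
  have hθ₀ : 0 < θ := by positivity
  have hθ₁ : θ ≤ 1 := (div_le_one hR).2 hrR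
  have hbad : A \ G ⊆ {x | ζ m - ζ (m + 1) ≤ |zeval ζ (w x) - zeval ζ (v x)|} := by
    rintro x ⟨hxA, hxG⟩
    have hwx : zeval ζ (w x) ≤ ζ (m + 1) :=
      zeval_le hζpos hζanti (not_le.1 fun h => hxG ⟨hxA, h⟩).le
    rw [mem_ofPred_eq, abs_sub_comm]
    linarith [hvA x hxA, le_abs_self (zeval ζ (v x) - zeval ζ (w x))]
  have himage : AffineMap.homothety x₀ θ '' G
      ⊆ {x | ζ C ≤ |zeval ζ (w x) - zeval ζ (v x)|} := by
    rintro _ ⟨x, ⟨hxA, hxw⟩, rfl⟩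
    rw [AffineMap.homothety_eq_lineMap]
    have hwy := hw.apply_lineMap_le hC (hxw.trans (EReal.coe_le_coe_iff.2 hmC)) hθ₀.le hθ₁
    rw [show (1 - θ) * C + θ * C = C by ring] at hwy
    have hy : AffineMap.lineMap x₀ x θ ∈ ball x₀ r := by
      rw [mem_ball, dist_lineMap_left, Real.norm_of_nonneg hθ₀.le, dist_comm]
      calc θ * dist x x₀ < θ * R := by gcongr; exact hA hxA
        _ = r := div_mul_cancel₀ r hR.ne'
    rw [mem_ofPred_eq, hvtop _ hy, zeval_top, sub_zero,
      abs_of_nonneg (zeval_nonneg hζpos _)]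
    exact le_zeval hζanti (hwbot _) hwy
  have hscale :
      volume G = ENNReal.ofReal ((R / r) ^ n) * volume (AffineMap.homothety x₀ θ '' G) := by
    rw [Measure.addHaar_image_homothety, finrank_euclideanSpace_fin,
      abs_of_pos (by positivity), ← mul_assoc, ← ENNReal.ofReal_mul (by positivity), ← mul_pow,
      div_mul_div_cancel₀ hr.ne', div_self hR.ne', one_pow, ENNReal.ofReal_one, one_mul]
  calc volume A ≤ volume (A \ G) + volume G :=
        (measure_mono (subset_sdiff_union A G)).trans (measure_union_le _ _)
    _ ≤ _ := by
        rw [hscale]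
        gcongr

end Contraction

lemma exists_measure_ball_inter_sublevel_ne_zero {n : ℕ} {v : En n → EReal}
    (hv : (interior {x | v x ≠ ⊤}).Nonempty) :
    ∃ (y : En n) (s m : ℝ), volume (ball y s ∩ {x | v x ≤ m}) ≠ 0 := by
  obtain ⟨y, hy⟩ := hv
  obtain ⟨s, hs, hball⟩ := isOpen_iff.1 isOpen_interior y hy
  by_contra! h
  refine (measure_ball_pos volume y hs).ne' (measure_mono_null (fun x hx => ?_)
    (measure_iUnion_null fun m : ℕ => h y s m))
  have hx_top : v x ≠ ⊤ := interior_subset (hball hx)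
  obtain ⟨m, hm⟩ := exists_nat_ge (v x).toReal
  exact mem_iUnion.2 ⟨m, hx, (EReal.le_coe_toReal hx_top).trans (EReal.coe_le_coe_iff.2 hm)⟩

theorem statement4 (n : ℕ) (hn : 1 ≤ n) (p : ℝ) (hp : 1 ≤ p)
    (ζ : ℝ → ℝ) (hζpos : ∀ t, 0 < ζ t) (hζcont : Continuous ζ) (hζanti : StrictAnti ζ)
    (hmom : IntegrableOn (fun t => ζ t ^ p * t ^ (n - 1)) (Set.Ioi (0:ℝ)))
    (u : ℕ → En n → EReal) (v : En n → EReal)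
    (hu : ∀ k, ConvCd n (u k)) (hv : ConvCd n v)
    (hconv : Tendsto (fun k => ∫ x : En n, |zeval ζ (u k x) - zeval ζ (v x)| ^ p)
      atTop (𝓝 0)) :
    ∀ x₀ ∈ interior ({x | v x ≠ ⊤}ᶜ), Tendsto (fun k => u k x₀) atTop (𝓝 (⊤ : EReal)) := by
  intro x₀ hx₀
  have hp₀ : 0 < p := by linarith
  obtain ⟨r, hr, hball⟩ := isOpen_iff.1 isOpen_interior x₀ hx₀
  have hvtop : ∀ y ∈ ball x₀ r, v y = ⊤ := fun y hy => by simpa using interior_subset (hball hy)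
  obtain ⟨y, s, m, hA⟩ := exists_measure_ball_inter_sublevel_ne_zero hv.2
  set R := r + dist y x₀ + |s|
  have hAR : ball y s ∩ {x | v x ≤ m} ⊆ ball x₀ R := fun x hx => by
    have hxy : dist x y < s := hx.1
    exact mem_ball.2 (by linarith [dist_triangle x y x₀, le_abs_self s])
  -- `hconv` says something only because these integrands are integrable.
  have hint : ∀ k, Integrable fun x => |zeval ζ (u k x) - zeval ζ (v x)| ^ p := fun k => by
    have hLp := fun w (hw : ConvC n w) =>
      hw.memLp_zeval hn hp₀ hζpos hζcont hζanti.antitone hmom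
    simpa [ENNReal.toReal_ofReal hp₀.le] using
      ((hLp _ (hu k).1).sub (hLp _ hv.1)).integrable_norm_rpow (by simpa using hp₀)
        ENNReal.ofReal_ne_top
  have hsmall : ∀ c > 0, Tendsto (fun k => volume {x | c ≤ |zeval ζ (u k x) - zeval ζ (v x)|})
      atTop (𝓝 0) := fun c hc =>
    tendsto_measure_le_abs_of_tendsto_integral_rpow hp₀ hc hint hconv
  refine EReal.tendsto_nhds_top_iff_real.2 fun C => ?_
  set C' := max C (m + 1)
  have hlim := (hsmall _ (sub_pos.2 (hζanti (lt_add_one m)))).add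
    (ENNReal.Tendsto.const_mul (a := ENNReal.ofReal ((R / r) ^ n)) (hsmall _ (hζpos C'))
      (Or.inr ENNReal.ofReal_ne_top))
  rw [mul_zero, add_zero] at hlim
  filter_upwards [hlim.eventually (gt_mem_nhds (pos_iff_ne_zero.2 hA))] with k hk
  by_contra! hle
  have hrR : r ≤ R := by linarith [dist_nonneg (x := y) (y := x₀), abs_nonneg s]
  have hvA : ∀ x ∈ ball y s ∩ {x | v x ≤ m}, ζ m ≤ zeval ζ (v x) := fun x hx =>
    le_zeval hζanti.antitone (hv.1.1 x) hx.2
  exact hk.not_ge (measure_le_of_apply_center_le hζpos hζanti.antitone (hu k).1.2.2.2.1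
    (hu k).1.1 hr hrR hvtop hAR hvA (le_max_right _ _)
    (hle.trans (EReal.coe_le_coe_iff.2 (le_max_left _ _))))
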